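/- arXiv:1410.3813 — 2 statements merged into one kernel-verified Lean document; each statement's English description precedes it below -/
import Mathlib

section
/- Let λ₁ ≤ λ₂ ≤ λ₃ be real numbers with ν := λ₁+λ₂−λ₃ ≤ λ := λ₁+λ₃−λ₂ ≤ μ := λ₂+λ₃−λ₁. Suppose ν < 0, μ + λ + ν ≥ 1/c₁ for some c₁ > 0 (so μ ≥ 1/(2c₁)), and there exist ε > 0, c > 0 with λ²(μ−ν) ≤ cε and μ²(λ−ν) ≤ cε. Then −ν ≤ C√ε for a constant C depending only on c and c₁. -/
/-!
Since `λ ≤ μ`, the scalar curvature bound gives `2μ ≥ 1/c₁ - ν`, so `μ ≥ 1/(2c₁)` and `μ ≥ -ν/2`.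
If `λ ≥ ν/2`, then `λ - ν ≥ -ν/2` and `μ² ≥ -ν/(4c₁)`, so `μ²(λ - ν) ≤ cε` forces `ν² ≤ 8c₁cε`;
otherwise `λ² ≥ ν²/4` and `μ - ν ≥ 1/(2c₁)`, and `λ²(μ - ν) ≤ cε` gives the same bound.
Hence `C = √(8c₁c)` works. Below, `ℓ` stands for the eigenvalue `λ`.
-/

theorem sq_le_of_pinching {ν ℓ μ c₁ K : ℝ} (hνℓ : ν ≤ ℓ) (hℓμ : ℓ ≤ μ) (hν : ν ≤ 0)
    (hc₁ : 0 < c₁) (hS : 1 / c₁ ≤ μ + ℓ + ν) (hℓ : ℓ ^ 2 * (μ - ν) ≤ K)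
    (hμ : μ ^ 2 * (ℓ - ν) ≤ K) : ν ^ 2 ≤ 8 * c₁ * K := by
  have hc₁_inv : 0 < 1 / c₁ := by positivity
  have hμ_scalar : 1 / c₁ / 2 ≤ μ := by linarith
  have hμ_ν : -ν / 2 ≤ μ := by linarith
  suffices ν ^ 2 / (8 * c₁) ≤ K by rwa [div_le_iff₀ (by positivity), mul_comm] at this
  rcases le_or_gt (ν / 2) ℓ with hℓν | hℓν
  · calc ν ^ 2 / (8 * c₁) = 1 / c₁ / 2 * (-ν / 2) * (-ν / 2) := by field_simp; ring
      _ ≤ μ * μ * (ℓ - ν) := by gcongr <;> linarith [mul_self_nonneg μ]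
      _ = μ ^ 2 * (ℓ - ν) := by ring
      _ ≤ K := hμ
  · calc ν ^ 2 / (8 * c₁) = (-ν / 2) ^ 2 * (1 / c₁ / 2) := by field_simp; ring
      _ ≤ (-ℓ) ^ 2 * (μ - ν) := by gcongr <;> linarith
      _ = ℓ ^ 2 * (μ - ν) := by ring
      _ ≤ K := hℓ

/-- Key algebraic step of the Hamilton–Ivey type pinching estimate: if the
smallest curvature eigenvalue `ν` is negative, the scalar curvature is bounded
below by `1/c₁`, and `λ²(μ−ν) ≤ cε`, `μ²(λ−ν) ≤ cε`, then `−ν ≤ C√ε` for a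
constant `C` depending only on `c` and `c₁`. -/
theorem pinching_algebraic_step (c c₁ : ℝ) (hc : 0 < c) (hc₁ : 0 < c₁) :
    ∃ C : ℝ, 0 < C ∧
      ∀ l₁ l₂ l₃ ε : ℝ, l₁ ≤ l₂ → l₂ ≤ l₃ →
        (l₁ + l₂ - l₃) < 0 →
        1 / c₁ ≤ (l₂ + l₃ - l₁) + (l₁ + l₃ - l₂) + (l₁ + l₂ - l₃) →
        0 < ε →
        (l₁ + l₃ - l₂) ^ 2 * ((l₂ + l₃ - l₁) - (l₁ + l₂ - l₃)) ≤ c * ε →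
        (l₂ + l₃ - l₁) ^ 2 * ((l₁ + l₃ - l₂) - (l₁ + l₂ - l₃)) ≤ c * ε →
        -(l₁ + l₂ - l₃) ≤ C * Real.sqrt ε := by
  refine ⟨Real.sqrt (8 * c₁ * c), by positivity, ?_⟩
  intro l₁ l₂ l₃ ε h₁₂ h₂₃ hν hS _ hℓ hμ
  have hsq := sq_le_of_pinching (by linarith) (by linarith) hν.le hc₁ hS hℓ hμ
  rw [← mul_assoc] at hsq
  calc -(l₁ + l₂ - l₃) ≤ |l₁ + l₂ - l₃| := neg_le_abs _
    _ ≤ Real.sqrt (8 * c₁ * c * ε) := Real.abs_le_sqrt hsq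
    _ = Real.sqrt (8 * c₁ * c) * Real.sqrt ε := Real.sqrt_mul (by positivity) ε
end

section
/- Suppose u, S : M → ℝ are smooth with S > 0, u ≤ S (pointwise as functions), Δ_f S ≥ S − c₀S² for a constant c₀ > 0, and u := S − a f^{-1} + c₀ a² f^{-2} where Δ_f(f^{-1}) ≤ f^{-1} and Δ_f(f^{-2}) ≥ 2f^{-2}. Then Δ_f u ≥ u(1 − c₀ S − c₀ a f^{-1}) pointwise, using the factorization −c₀S² + c₀a²f^{-2} = −c₀(S − af^{-1})(S + af^{-1}) and S − af^{-1} ≤ u. -/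
/-- If `Δ_f S ≥ S − c₀S²`, `Δ_f(f⁻¹) ≤ f⁻¹` and `Δ_f(f⁻²) ≥ 2f⁻²`, then the
barrier `u = S − a f⁻¹ + c₀a²f⁻²` satisfies
`Δ_f u ≥ u(1 − c₀S − c₀a f⁻¹)` pointwise. -/
theorem barrier_differential_inequality {M : Type*}
    (Δf : (M → ℝ) →ₗ[ℝ] (M → ℝ)) (S f : M → ℝ) (a c₀ : ℝ)
    (ha : 0 < a) (hc₀ : 0 < c₀)
    (hS : ∀ x, 0 < S x) (hfpos : ∀ x, 0 < f x)
    (hΔS : ∀ x, S x - c₀ * (S x) ^ 2 ≤ Δf S x)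
    (hΔ1 : ∀ x, Δf (fun y => (f y)⁻¹) x ≤ (f x)⁻¹)
    (hΔ2 : ∀ x, 2 * ((f x)⁻¹) ^ 2 ≤ Δf (fun y => ((f y)⁻¹) ^ 2) x) :
    ∀ x, (S x - a * (f x)⁻¹ + c₀ * a ^ 2 * ((f x)⁻¹) ^ 2) *
          (1 - c₀ * S x - c₀ * a * (f x)⁻¹) ≤
        Δf (S - a • (fun y => (f y)⁻¹) + (c₀ * a ^ 2) • (fun y => ((f y)⁻¹) ^ 2)) x := by
  intro x
  have key : Δf (S - a • (fun y => (f y)⁻¹) + (c₀ * a ^ 2) • (fun y => ((f y)⁻¹) ^ 2)) x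
      = Δf S x - a * Δf (fun y => (f y)⁻¹) x
        + (c₀ * a ^ 2) * Δf (fun y => ((f y)⁻¹) ^ 2) x := by
    simp [map_add, map_sub, map_smul]
  rw [key]
  have hF : 0 < (f x)⁻¹ := inv_pos.mpr (hfpos x)
  have hslack : 0 ≤ c₀ * (S x + a * (f x)⁻¹) * (c₀ * a ^ 2 * ((f x)⁻¹) ^ 2) :=
    mul_nonneg (mul_nonneg hc₀.le (by nlinarith [hS x, hF, ha])) (by positivity)
  nlinarith [hΔS x, hΔ1 x, hΔ2 x, hslack, ha.le, mul_pos hc₀ (mul_pos ha ha)]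
end
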